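/- arXiv:2303.10617 — 4 statements merged into one kernel-verified Lean document; each statement's English description precedes it below -/
import Mathlib

section
/- Let K be a field, V a finite-dimensional K-vector space, and x = (T₁,…,T_d, v₁,…,v_r) a tuple with T_i ∈ End_K(V) and v_j ∈ V such that Span_K(x) = V. If g ∈ GL(V) satisfies g ∘ T_i = T_i ∘ g for all i = 1,…,d and g(v_j) = v_j for all j = 1,…,r, then g is the identity. (In other words, the action of GL(V) by simultaneous conjugation on the T_i and the natural action on the v_j is free on the locus of full-span tuples.) -/
/-- `tupleSpan K T v` is the `K`-linear span of all vectors of the form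
`T i₁ ∘ ⋯ ∘ T iₘ (v j)`, where `m ≥ 0` and `1 ≤ j ≤ r`. -/
def tupleSpan (K : Type*) {V : Type*} [Field K] [AddCommGroup V] [Module K V]
    {d r : ℕ} (T : Fin d → Module.End K V) (v : Fin r → V) : Submodule K V :=
  Submodule.span K {w | ∃ (l : List (Fin d)) (j : Fin r), w = ((l.map T).prod) (v j)}

/-- If a tuple `(T₁,…,T_d,v₁,…,v_r)` has full span, then any `g ∈ GL(V)` commuting with
all the `Tᵢ` and fixing all the `vⱼ` is the identity. -/
theorem stmt_0 {K V : Type*} [Field K] [AddCommGroup V] [Module K V]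
    [FiniteDimensional K V] {d r : ℕ} (hd : 1 ≤ d) (hr : 1 ≤ r)
    (T : Fin d → Module.End K V) (v : Fin r → V)
    (hspan : tupleSpan K T v = ⊤)
    (g : V ≃ₗ[K] V)
    (hgT : ∀ i : Fin d, ∀ w : V, g (T i w) = T i (g w))
    (hgv : ∀ j : Fin r, g (v j) = v j) :
    g = LinearEquiv.refl K V := by
  have key : ∀ w : V, g w = w := by
    have : ∀ w ∈ tupleSpan K T v, g w = w := by
      intro w hw
      induction hw using Submodule.span_induction with
      | mem w hw =>
        obtain ⟨l, j, rfl⟩ := hw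
        induction l with
        | nil => simpa using hgv j
        | cons i l ih =>
          simp only [List.map_cons, List.prod_cons, Module.End.mul_apply]
          rw [hgT, ih]
      | zero => simp
      | add a b _ _ ha hb => simp [ha, hb]
      | smul c a _ ha => simp [ha]
    intro w
    exact this w (hspan ▸ Submodule.mem_top)
  ext w
  exact key w
end

section
/- Let K be a field, V an n-dimensional K-vector space, and Λ ⊆ V a K-subspace of dimension k. Then there is a bijection between the set {x = (T₁,…,T_d, v₁,…,v_r) ∈ End_K(V)^d × V^r : Span_K(x) = Λ} and the product {y = (S₁,…,S_d, w₁,…,w_r) ∈ End_K(Λ)^d × Λ^r : Span_K(y) = Λ} × Hom_K(V/Λ, Λ)^d × End_K(V/Λ)^d. (Choosing a basis of V whose first k vectors span Λ, a tuple with span exactly Λ is precisely a block upper-triangular tuple whose diagonal (k×k)-data is a full-span tuple on Λ, the framing vectors lying in Λ, with arbitrary off-diagonal k×(n−k) blocks and arbitrary (n−k)×(n−k) blocks.) -/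
namespace Submodule

variable {R M : Type*} [Ring R] [AddCommGroup M] [Module R M] {p : Submodule R M}
  {s : M ⧸ p →ₗ[R] M}

def retractionOfSection (hs : p.mkQ ∘ₗ s = LinearMap.id) : M →ₗ[R] p :=
  (LinearMap.id - s ∘ₗ p.mkQ).codRestrict p fun x =>
    (Quotient.mk_eq_zero p).1 <| by simpa [sub_eq_zero] using congr($hs (p.mkQ x)).symm

variable (hs : p.mkQ ∘ₗ s = LinearMap.id)
include hs

theorem mk_section_apply (ξ : M ⧸ p) : Quotient.mk (s ξ) = ξ :=
  congr($hs ξ)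

@[simp]
theorem coe_retractionOfSection_apply (x : M) :
    (retractionOfSection hs x : M) = x - s (Quotient.mk x) := by
  simp [retractionOfSection]

theorem retractionOfSection_apply_coe (a : p) : retractionOfSection hs a = a := by
  ext
  simp [(Quotient.mk_eq_zero p).2 a.2]

theorem retractionOfSection_section_apply (ξ : M ⧸ p) : retractionOfSection hs (s ξ) = 0 := by
  ext
  simp [mk_section_apply hs]

theorem retractionOfSection_add_section_mk (x : M) :
    (retractionOfSection hs x : M) + s (Quotient.mk x) = x := by
  simp

def invariantEndEquiv :
    {T : Module.End R M // p ≤ p.comap T} ≃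
      Module.End R p × (M ⧸ p →ₗ[R] p) × Module.End R (M ⧸ p) where
  toFun T := (T.1.restrict T.2, retractionOfSection hs ∘ₗ T.1 ∘ₗ s, p.mapQ p T.1 T.2)
  invFun B :=
    ⟨p.subtype ∘ₗ B.1 ∘ₗ retractionOfSection hs + p.subtype ∘ₗ B.2.1 ∘ₗ p.mkQ +
        s ∘ₗ B.2.2 ∘ₗ p.mkQ, fun a ha => by
      simp [(Quotient.mk_eq_zero p).2 ha, retractionOfSection_apply_coe hs ⟨a, ha⟩]⟩
  left_inv := by
    rintro ⟨T, hT⟩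
    ext x
    have hTs : (Quotient.mk (T (s (Quotient.mk x))) : M ⧸ p) = Quotient.mk (T x) := by
      simpa using congr(p.mapQ p T hT $(mk_section_apply hs (Quotient.mk x)))
    conv_rhs => rw [← retractionOfSection_add_section_mk hs x, map_add,
      ← retractionOfSection_add_section_mk hs (T (s _)), hTs]
    simp only [LinearMap.add_apply, LinearMap.comp_apply, mkQ_apply, mapQ_apply, subtype_apply,
      LinearMap.coe_restrict_apply]
    abel
  right_inv := by
    rintro ⟨S, C, Q⟩
    have hmk (a : p) : (Quotient.mk (a : M) : M ⧸ p) = 0 := (Quotient.mk_eq_zero p).2 a.2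
    refine Prod.ext ?_ (Prod.ext ?_ ?_)
    · ext a
      simp [hmk, retractionOfSection_apply_coe hs]
    · ext ξ
      simp [retractionOfSection_apply_coe hs, retractionOfSection_section_apply hs,
        mk_section_apply hs]
    · refine linearMap_qext p (LinearMap.ext fun x => ?_)
      simp [hmk, mk_section_apply hs]

end Submodule

section TupleSpan

variable {K V V' : Type*} [Field K] [AddCommGroup V] [Module K V] [AddCommGroup V'] [Module K V']
  {d r : ℕ}

theorem map_list_prod_map_apply (f : V →ₗ[K] V') {T : Fin d → Module.End K V}
    {T' : Fin d → Module.End K V'} (hf : ∀ i x, f (T i x) = T' i (f x)) (l : List (Fin d))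
    (x : V) : f ((l.map T).prod x) = (l.map T').prod (f x) := by
  induction l with
  | nil => rfl
  | cons i l ih => simp [Module.End.mul_apply, hf, ih]

theorem tupleSpan_map (f : V →ₗ[K] V') {T : Fin d → Module.End K V}
    {T' : Fin d → Module.End K V'} (hf : ∀ i x, f (T i x) = T' i (f x)) (v : Fin r → V) :
    (tupleSpan K T v).map f = tupleSpan K T' (f ∘ v) := by
  rw [tupleSpan, Submodule.map_span, tupleSpan]
  congr 1
  ext w
  constructor
  · rintro ⟨_, ⟨l, j, rfl⟩, rfl⟩
    exact ⟨l, j, map_list_prod_map_apply f hf l (v j)⟩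
  · rintro ⟨l, j, rfl⟩
    exact ⟨_, ⟨l, j, rfl⟩, map_list_prod_map_apply f hf l (v j)⟩

theorem mem_of_tupleSpan_eq {Λ : Submodule K V} {T : Fin d → Module.End K V} {v : Fin r → V}
    (h : tupleSpan K T v = Λ) (j : Fin r) : v j ∈ Λ :=
  h ▸ Submodule.subset_span ⟨[], j, by simp⟩

theorem le_comap_of_tupleSpan_eq {Λ : Submodule K V} {T : Fin d → Module.End K V} {v : Fin r → V}
    (h : tupleSpan K T v = Λ) (i : Fin d) : Λ ≤ Λ.comap (T i) := by
  subst h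
  rw [← Submodule.map_le_iff_le_comap, tupleSpan, Submodule.map_span, Submodule.span_le]
  rintro _ ⟨_, ⟨l, j, rfl⟩, rfl⟩
  exact Submodule.subset_span ⟨i :: l, j, by simp [Module.End.mul_apply]⟩

theorem tupleSpan_restrict_eq_top_iff {Λ : Submodule K V} {T : Fin d → Module.End K V}
    (hT : ∀ i, Λ ≤ Λ.comap (T i)) {v : Fin r → Λ} :
    tupleSpan K (fun i => (T i).restrict (hT i)) v = ⊤ ↔ tupleSpan K T (Λ.subtype ∘ v) = Λ := by
  rw [← tupleSpan_map (T := fun i => (T i).restrict (hT i)) (T' := T) Λ.subtype (fun _ _ => rfl),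
    ← (Submodule.map_injective_of_injective Λ.injective_subtype).eq_iff, Submodule.map_subtype_top]

def tupleSpanEqEquiv (Λ : Submodule K V) :
    {x : (Fin d → Module.End K V) × (Fin r → V) // tupleSpan K x.1 x.2 = Λ} ≃
      {y : (Fin d → {T : Module.End K V // Λ ≤ Λ.comap T}) × (Fin r → Λ) //
        tupleSpan K (fun i => (y.1 i).1.restrict (y.1 i).2) y.2 = ⊤} where
  toFun x :=
    ⟨(fun i => ⟨x.1.1 i, le_comap_of_tupleSpan_eq x.2 i⟩,
        fun j => ⟨x.1.2 j, mem_of_tupleSpan_eq x.2 j⟩),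
      (tupleSpan_restrict_eq_top_iff _).2 x.2⟩
  invFun y :=
    ⟨(fun i => (y.1.1 i).1, Λ.subtype ∘ y.1.2), (tupleSpan_restrict_eq_top_iff _).1 y.2⟩
  left_inv _ := rfl
  right_inv _ := rfl

end TupleSpan

def subtypePiProdEquiv {ι A B X : Type*} (P : (ι → A) → X → Prop) :
    {y : (ι → A × B) × X // P (fun i => (y.1 i).1) y.2} ≃
      {z : (ι → A) × X // P z.1 z.2} × (ι → B) where
  toFun y := (⟨(fun i => (y.1.1 i).1, y.1.2), y.2⟩, fun i => (y.1.1 i).2)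
  invFun z := ⟨(fun i => (z.1.1.1 i, z.2 i), z.1.1.2), z.1.2⟩
  left_inv _ := rfl
  right_inv _ := rfl

theorem stmt_4_general {K V : Type*} [Field K] [AddCommGroup V] [Module K V] {d r : ℕ}
    (Λ : Submodule K V) :
    Nonempty
      ({x : (Fin d → Module.End K V) × (Fin r → V) // tupleSpan K x.1 x.2 = Λ} ≃
        ({y : (Fin d → Module.End K Λ) × (Fin r → Λ) // tupleSpan K y.1 y.2 = ⊤} ×
          (Fin d → ((V ⧸ Λ) →ₗ[K] Λ)) × (Fin d → Module.End K (V ⧸ Λ)))) := by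
  obtain ⟨s, hs⟩ := Λ.mkQ.exists_rightInverse_of_surjective Λ.range_mkQ
  let blocks := (Equiv.piCongrRight fun _ : Fin d => Λ.invariantEndEquiv hs).prodCongr
    (Equiv.refl (Fin r → Λ))
  exact ⟨(tupleSpanEqEquiv Λ).trans <| (blocks.subtypeEquiv fun _ => Iff.rfl).trans <|
    (subtypePiProdEquiv fun S w => tupleSpan K S w = ⊤).trans <|
      (Equiv.refl _).prodCongr (Equiv.arrowProdEquivProdArrow _ _ _)⟩

/-- The set of tuples on `V` with span exactly `Λ` is in bijection with the product of the
set of full-span tuples on `Λ`, the space `Hom(V/Λ, Λ)^d` of off-diagonal blocks, and the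
space `End(V/Λ)^d` of lower diagonal blocks. -/
theorem stmt_4 {K V : Type*} [Field K] [AddCommGroup V] [Module K V]
    [FiniteDimensional K V] {d r n k : ℕ} (hd : 1 ≤ d) (hr : 1 ≤ r)
    (hdim : Module.finrank K V = n)
    (Λ : Submodule K V) (hΛ : Module.finrank K Λ = k) :
    Nonempty
      ({x : (Fin d → Module.End K V) × (Fin r → V) // tupleSpan K x.1 x.2 = Λ} ≃
        ({y : (Fin d → Module.End K Λ) × (Fin r → Λ) // tupleSpan K y.1 y.2 = ⊤} ×
          (Fin d → ((V ⧸ Λ) →ₗ[K] Λ)) × (Fin d → Module.End K (V ⧸ Λ)))) :=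
  stmt_4_general Λ
end

section
/- Let K be a finite field with q elements, fix integers d, r ≥ 1 and n ≥ 0, and let Λ ⊆ K^n be a K-subspace of dimension k. Then the number of tuples x = (T₁,…,T_d, v₁,…,v_r) ∈ End_K(K^n)^d × (K^n)^r with Span_K(x) = Λ equals q^{d·n·(n−k)} · u_k, where u_k is the number of full-span tuples on K^k. -/
/-!
Choose a complement `W` of `Λ`, so that `V ≅ Λ × W` with `Λ` becoming `Λ × 0`. A tuple spans
`Λ × 0` exactly when the `vⱼ` lie in `Λ × 0`, every `Tᵢ` preserves `Λ × 0`, and the compressions of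
the `Tᵢ` to `Λ` together with the `vⱼ` span `Λ`. The restriction of `Tᵢ` to `0 × W` is then
unconstrained, giving `q ^ (dim W · dim V)` choices for each of the `d` operators.
-/

section Counting

variable {K : Type*} [Field K] {d r : ℕ}

section TupleSpan

variable {V V' : Type*} [AddCommGroup V] [Module K V] [AddCommGroup V'] [Module K V']

theorem vec_mem_tupleSpan (T : Fin d → Module.End K V) (v : Fin r → V) (j : Fin r) :
    v j ∈ tupleSpan K T v :=
  Submodule.subset_span ⟨[], j, by simp⟩

theorem apply_mem_tupleSpan (T : Fin d → Module.End K V) (v : Fin r → V) (i : Fin d) {x : V}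
    (hx : x ∈ tupleSpan K T v) : T i x ∈ tupleSpan K T v := by
  have hmap : T i x ∈ (tupleSpan K T v).map (T i) := Submodule.mem_map_of_mem hx
  rw [tupleSpan, Submodule.map_span] at hmap
  refine Submodule.span_le.mpr ?_ hmap
  rintro _ ⟨_, ⟨l, j, rfl⟩, rfl⟩
  exact Submodule.subset_span ⟨i :: l, j, by simp [Module.End.mul_apply]⟩

theorem tupleSpan_eq_map (f : V →ₗ[K] V') {S : Fin d → Module.End K V}
    {T : Fin d → Module.End K V'} {w : Fin r → V} {v : Fin r → V'}
    (hT : ∀ i x, T i (f x) = f (S i x)) (hv : ∀ j, v j = f (w j)) :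
    tupleSpan K T v = (tupleSpan K S w).map f := by
  have hwords : ∀ (l : List (Fin d)) (x : V), (l.map T).prod (f x) = f ((l.map S).prod x) := by
    intro l
    induction l with
    | nil => simp
    | cons i l ih => simp [Module.End.mul_apply, ih, hT]
  rw [tupleSpan, tupleSpan, Submodule.map_span]
  congr 1
  ext z
  constructor
  · rintro ⟨l, j, rfl⟩
    exact ⟨(l.map S).prod (w j), ⟨l, j, rfl⟩, by rw [hv j, hwords]⟩
  · rintro ⟨_, ⟨l, j, rfl⟩, rfl⟩
    exact ⟨l, j, by rw [hv j, hwords]⟩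

variable (d r) in
abbrev TuplesWithSpan (L : Submodule K V) : Type _ :=
  {x : (Fin d → Module.End K V) × (Fin r → V) // tupleSpan K x.1 x.2 = L}

def TuplesWithSpan.congr (e : V ≃ₗ[K] V') {L : Submodule K V} {L' : Submodule K V'}
    (hL : L.map (e : V →ₗ[K] V') = L') : TuplesWithSpan d r L ≃ TuplesWithSpan d r L' :=
  Equiv.subtypeEquiv
    ((Equiv.piCongrRight fun _ => e.conj.toEquiv).prodCongr
      (Equiv.piCongrRight fun _ => e.toEquiv)) fun x => by
    have hconj : tupleSpan K (fun i => e.conj (x.1 i)) (fun j => e (x.2 j)) =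
        (tupleSpan K x.1 x.2).map (e : V →ₗ[K] V') :=
      tupleSpan_eq_map (e : V →ₗ[K] V') (fun i y => by simp [LinearEquiv.conj_apply])
        fun _ => rfl
    change _ ↔ tupleSpan K (fun i => e.conj (x.1 i)) (fun j => e (x.2 j)) = L'
    rw [hconj, ← hL]
    exact (Submodule.map_injective_of_injective e.injective).eq_iff.symm

end TupleSpan

section BlockTriangular

variable {M N : Type*} [AddCommGroup M] [Module K M] [AddCommGroup N] [Module K N]

section
variable {T : Fin d → Module.End K (M × N)} {v : Fin r → M × N}
  (h : tupleSpan K T v = LinearMap.ker (LinearMap.snd K M N))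
include h

theorem inl_fst_apply_inl_of_tupleSpan_eq_ker_snd (i : Fin d) (x : M) :
    LinearMap.inl K M N (T i (x, 0)).1 = T i (x, 0) := by
  have hx : ((x, 0) : M × N) ∈ tupleSpan K T v := by simp [h]
  have := apply_mem_tupleSpan T v i hx
  rw [h] at this
  exact Prod.ext rfl this.symm

theorem inl_fst_of_tupleSpan_eq_ker_snd (j : Fin r) :
    LinearMap.inl K M N (v j).1 = v j := by
  have := vec_mem_tupleSpan T v j
  rw [h] at this
  exact Prod.ext rfl this.symm

theorem tupleSpan_compress_eq_top :
    tupleSpan K (fun i => LinearMap.fst K M N ∘ₗ T i ∘ₗ LinearMap.inl K M N)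
      (fun j => (v j).1) = ⊤ := by
  have hmap := tupleSpan_eq_map (LinearMap.inl K M N) (T := T) (v := v)
    (S := fun i => LinearMap.fst K M N ∘ₗ T i ∘ₗ LinearMap.inl K M N) (w := fun j => (v j).1)
    (fun i x => (inl_fst_apply_inl_of_tupleSpan_eq_ker_snd h i x).symm)
    fun j => (inl_fst_of_tupleSpan_eq_ker_snd h j).symm
  rw [h, ← LinearMap.range_inl, ← Submodule.map_top] at hmap
  exact (Submodule.map_injective_of_injective LinearMap.inl_injective hmap).symm

end

def TuplesWithSpan.blockEquiv :
    TuplesWithSpan d r (LinearMap.ker (LinearMap.snd K M N)) ≃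
      TuplesWithSpan d r (⊤ : Submodule K M) × (Fin d → N →ₗ[K] M × N) where
  toFun x := ⟨⟨⟨fun i => LinearMap.fst K M N ∘ₗ x.1.1 i ∘ₗ LinearMap.inl K M N,
      fun j => (x.1.2 j).1⟩, tupleSpan_compress_eq_top x.2⟩,
    fun i => x.1.1 i ∘ₗ LinearMap.inr K M N⟩
  invFun y := ⟨⟨fun i => LinearMap.inl K M N ∘ₗ y.1.1.1 i ∘ₗ LinearMap.fst K M N +
      y.2 i ∘ₗ LinearMap.snd K M N, fun j => (y.1.1.2 j, 0)⟩, by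
    rw [tupleSpan_eq_map (LinearMap.inl K M N) (S := y.1.1.1) (w := y.1.1.2)
      (v := fun j => (y.1.1.2 j, 0)) (by simp) fun _ => rfl, y.1.2, Submodule.map_top,
      LinearMap.range_inl]⟩
  left_inv := by
    rintro ⟨⟨T, v⟩, h⟩
    refine Subtype.ext (Prod.ext (funext fun i => LinearMap.prod_ext ?_ ?_) (funext fun j => ?_))
    · ext x : 1
      simpa [Prod.mk_zero_zero] using inl_fst_apply_inl_of_tupleSpan_eq_ker_snd h i x
    · ext x : 1
      simp [Prod.mk_zero_zero]
    · exact inl_fst_of_tupleSpan_eq_ker_snd h j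
  right_inv := by
    rintro ⟨⟨⟨S, w⟩, hy⟩, B⟩
    refine Prod.ext (Subtype.ext (Prod.ext ?_ rfl)) ?_ <;> funext i <;> ext <;> simp

end BlockTriangular

theorem map_prodEquivOfIsCompl_symm_eq_ker_snd {V : Type*} [AddCommGroup V] [Module K V]
    {L W : Submodule K V} (hLW : IsCompl L W) :
    L.map ((L.prodEquivOfIsCompl W hLW).symm : V →ₗ[K] L × W) =
      LinearMap.ker (LinearMap.snd K L W) := by
  ext x
  obtain ⟨y, rfl⟩ := (L.prodEquivOfIsCompl W hLW).symm.surjective x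
  rw [Submodule.mem_map_equiv, LinearEquiv.symm_symm, LinearEquiv.apply_symm_apply,
    LinearMap.mem_ker, LinearMap.snd_apply, Submodule.prodEquivOfIsCompl_symm_apply_snd_eq_zero]

theorem natCard_tuplesWithSpan {V : Type*} [AddCommGroup V] [Module K V] [Finite K]
    [FiniteDimensional K V] (L : Submodule K V) :
    Nat.card (TuplesWithSpan d r L) =
      Nat.card K ^ (d * Module.finrank K V * (Module.finrank K V - Module.finrank K L)) *
        Nat.card (TuplesWithSpan d r (⊤ : Submodule K L)) := by
  obtain ⟨W, hLW⟩ := L.exists_isCompl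
  have hW : Module.finrank K W = Module.finrank K V - Module.finrank K L := by
    have := Submodule.finrank_add_eq_of_isCompl hLW
    omega
  let e := (L.prodEquivOfIsCompl W hLW).symm
  rw [Nat.card_congr (TuplesWithSpan.congr e (map_prodEquivOfIsCompl_symm_eq_ker_snd hLW)),
    Nat.card_congr TuplesWithSpan.blockEquiv, Nat.card_prod, Nat.card_fun,
    Module.natCard_eq_pow_finrank (K := K) (V := W →ₗ[K] L × W), Module.finrank_linearMap,
    ← e.finrank_eq, hW, Nat.card_eq_fintype_card (α := Fin d), Fintype.card_fin, ← pow_mul,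
    mul_comm]
  ring

end Counting

theorem stmt_5_general {K : Type*} [Field K] [Fintype K] {q d r n k : ℕ}
    (hq : Fintype.card K = q)
    (Λ : Submodule K (Fin n → K)) (hΛ : Module.finrank K Λ = k) :
    Nat.card {x : (Fin d → Module.End K (Fin n → K)) × (Fin r → (Fin n → K)) //
        tupleSpan K x.1 x.2 = Λ} =
      q ^ (d * n * (n - k)) *
        Nat.card {y : (Fin d → Module.End K (Fin k → K)) × (Fin r → (Fin k → K)) //
          tupleSpan K y.1 y.2 = ⊤} := by
  let e : Λ ≃ₗ[K] (Fin k → K) := (Module.finBasisOfFinrankEq K Λ hΛ).equivFun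
  have he : (⊤ : Submodule K Λ).map (e : Λ →ₗ[K] Fin k → K) = ⊤ := by
    rw [Submodule.map_top, LinearEquiv.range]
  change Nat.card (TuplesWithSpan d r Λ) = _ * Nat.card (TuplesWithSpan d r _)
  rw [natCard_tuplesWithSpan, Nat.card_congr (TuplesWithSpan.congr e he),
    Nat.card_eq_fintype_card, hq, hΛ, Module.finrank_fin_fun]

/-- Over a finite field with `q` elements, the number of tuples on `K^n` with span exactly a
fixed `k`-dimensional subspace `Λ` is `q^(d·n·(n-k)) · u_k`, where `u_k` is the number of
full-span tuples on `K^k`. -/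
theorem stmt_5 {K : Type*} [Field K] [Fintype K] {q d r n k : ℕ}
    (hq : Fintype.card K = q) (hd : 1 ≤ d) (hr : 1 ≤ r)
    (Λ : Submodule K (Fin n → K)) (hΛ : Module.finrank K Λ = k) :
    Nat.card {x : (Fin d → Module.End K (Fin n → K)) × (Fin r → (Fin n → K)) //
        tupleSpan K x.1 x.2 = Λ} =
      q ^ (d * n * (n - k)) *
        Nat.card {y : (Fin d → Module.End K (Fin k → K)) × (Fin r → (Fin k → K)) //
          tupleSpan K y.1 y.2 = ⊤} :=
  stmt_5_general hq Λ hΛ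
end

section
/- Let F be a field, x ∈ F a nonzero element, and n ≥ 0 an integer. Then x^n · x^{C(n,2)} · [n]_x = x^{n²} · ( x^n − Σ_{k=0}^{n−1} (∏_{i=n−k+1}^{n} (x^i − 1)) · x^{C(k,2)} · x^{k} · (x^{−1})^{n k} ), where [n]_x = ∏_{i=1}^{n}(x^i − 1) and C(m,2) = m(m−1)/2. (This is the formal identity to which the main motivic recursion specialises when d = r = 1, using that the generating series of the motives [ncQuot^n_{1,1}] is 1/(1 − L t).) -/
/-- `(m+1).choose 2 = m.choose 2 + m`. -/
lemma choose_two_succ (m : ℕ) : (m + 1).choose 2 = m.choose 2 + m := by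
  have h : (m + 1).choose 2 = m.choose 1 + m.choose 2 := Nat.choose_succ_succ m 1
  have h1 : m.choose 1 = m := Nat.choose_one_right m
  omega

/-- Vandermonde-type identity for `choose 2`. -/
lemma choose_two_add (a b : ℕ) : (a + b).choose 2 = a.choose 2 + b.choose 2 + a * b := by
  induction b with
  | zero => simp
  | succ b ih =>
    have h1 : (a + (b + 1)) = (a + b) + 1 := by ring
    rw [h1, choose_two_succ, ih, choose_two_succ]
    ring

lemma sq_eq_two_choose (m : ℕ) : m ^ 2 = 2 * m.choose 2 + m := by
  induction m with
  | zero => simp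
  | succ m ih =>
    rw [choose_two_succ]
    have : (m + 1) ^ 2 = m ^ 2 + 2 * m + 1 := by ring
    omega

/-- The key telescoping identity:
`∑_{j=0}^{n} x^{C(j,2)} ∏_{i=j+1}^{n} (x^i - 1) = x^{C(n+1,2)}`. -/
lemma key_telescope {F : Type*} [Field F] (x : F) (n : ℕ) :
    ∑ j ∈ Finset.range (n + 1), x ^ (j.choose 2) * ∏ i ∈ Finset.Icc (j + 1) n, (x ^ i - 1)
      = x ^ ((n + 1).choose 2) := by
  induction n with
  | zero => simp
  | succ n ih =>
    rw [Finset.sum_range_succ]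
    have h1 : ∀ j ∈ Finset.range (n + 1),
        x ^ (j.choose 2) * ∏ i ∈ Finset.Icc (j + 1) (n + 1), (x ^ i - 1)
          = (x ^ (j.choose 2) * ∏ i ∈ Finset.Icc (j + 1) n, (x ^ i - 1)) * (x ^ (n + 1) - 1) := by
      intro j hj
      rw [Finset.mem_range] at hj
      rw [Finset.prod_Icc_succ_top (by omega)]
      ring
    rw [Finset.sum_congr rfl h1, ← Finset.sum_mul, ih]
    have h2 : Finset.Icc (n + 1 + 1) (n + 1) = ∅ := by
      rw [Finset.Icc_eq_empty]; omega
    rw [h2, Finset.prod_empty, mul_one]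
    rw [choose_two_succ (n + 1), pow_add]
    ring

/-- The formal identity to which the main motivic recursion specialises when `d = r = 1`:
`x^n · x^C(n,2) · [n]_x
  = x^(n²) · (x^n − Σ_{k=0}^{n−1} (∏_{i=n−k+1}^n (x^i − 1)) · x^C(k,2) · x^k · (x⁻¹)^(nk))`. -/
theorem stmt_12 {F : Type*} [Field F] (x : F) (hx : x ≠ 0) (n : ℕ) :
    x ^ n * x ^ n.choose 2 * ∏ i ∈ Finset.range n, (x ^ (i + 1) - 1) =
      x ^ (n ^ 2) *
        (x ^ n - ∑ k ∈ Finset.range n,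
          (∏ i ∈ Finset.Icc (n - k + 1) n, (x ^ i - 1)) *
            x ^ k.choose 2 * x ^ k * (x⁻¹) ^ (n * k)) := by
  set Q : ℕ → F := fun j => ∏ i ∈ Finset.Icc (j + 1) n, (x ^ i - 1) with hQ
  have hprod : ∏ i ∈ Finset.range n, (x ^ (i + 1) - 1) = Q 0 := by
    rw [hQ]
    simp only [zero_add]
    rw [← Finset.Ico_add_one_right_eq_Icc, Finset.prod_Ico_eq_prod_range]
    simp [add_comm]
  -- termwise rewriting of the sum
  have hterm : ∀ k ∈ Finset.range n,
      x ^ (n ^ 2) * ((∏ i ∈ Finset.Icc (n - k + 1) n, (x ^ i - 1)) *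
          x ^ k.choose 2 * x ^ k * (x⁻¹) ^ (n * k))
        = x ^ ((n + 1).choose 2) * (x ^ ((n - k).choose 2) * Q (n - k)) := by
    intro k hk
    rw [Finset.mem_range] at hk
    have hexp : n ^ 2 + k.choose 2 + k = (n + 1).choose 2 + (n - k).choose 2 + n * k := by
      set j := n - k with hj
      have hn : n = j + k := by omega
      rw [hn, choose_two_succ (j + k), choose_two_add j k]
      have hsq : (j + k) ^ 2 = j ^ 2 + 2 * (j * k) + k ^ 2 := by ring
      have h1 := sq_eq_two_choose j
      have h2 := sq_eq_two_choose k
      have h3 : (j + k) * k = j * k + k ^ 2 := by ring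
      omega
    have hinv : x ^ (n * k) * (x⁻¹) ^ (n * k) = 1 := by
      rw [← mul_pow, mul_inv_cancel₀ hx, one_pow]
    have hQnk : Q (n - k) = ∏ i ∈ Finset.Icc (n - k + 1) n, (x ^ i - 1) := rfl
    calc x ^ (n ^ 2) * ((∏ i ∈ Finset.Icc (n - k + 1) n, (x ^ i - 1)) *
          x ^ k.choose 2 * x ^ k * (x⁻¹) ^ (n * k))
        = (x ^ (n ^ 2) * x ^ k.choose 2 * x ^ k) * (x⁻¹) ^ (n * k) * Q (n - k) := by
          rw [hQnk]; ring
      _ = x ^ ((n + 1).choose 2 + (n - k).choose 2 + n * k) * (x⁻¹) ^ (n * k) * Q (n - k) := by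
          rw [← pow_add, ← pow_add, hexp]
      _ = x ^ ((n + 1).choose 2) * x ^ ((n - k).choose 2) * (x ^ (n * k) * (x⁻¹) ^ (n * k))
            * Q (n - k) := by rw [pow_add, pow_add]; ring
      _ = x ^ ((n + 1).choose 2) * (x ^ ((n - k).choose 2) * Q (n - k)) := by
          rw [hinv]; ring
  -- evaluate the reflected sum using the key telescoping identity
  have hsum : ∑ k ∈ Finset.range n, x ^ ((n - k).choose 2) * Q (n - k)
      = x ^ ((n + 1).choose 2) - Q 0 := by
    set g : ℕ → F := fun j => x ^ ((j + 1).choose 2) * Q (j + 1) with hg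
    have h1 : ∀ k ∈ Finset.range n,
        x ^ ((n - k).choose 2) * Q (n - k) = g (n - 1 - k) := by
      intro k hk
      rw [Finset.mem_range] at hk
      have : n - k = (n - 1 - k) + 1 := by omega
      rw [this, hg]
    rw [Finset.sum_congr rfl h1, Finset.sum_range_reflect g n]
    simp only [hg]
    have h2 := key_telescope x n
    rw [Finset.sum_range_succ'] at h2
    simp only [Nat.choose_zero_right, zero_add] at h2 ⊢
    have : Q 0 = ∏ i ∈ Finset.Icc 1 n, (x ^ i - 1) := by simp [hQ]
    rw [this]
    have h2' : (∑ k ∈ Finset.range n, x ^ ((k + 1).choose 2) *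
        ∏ i ∈ Finset.Icc (k + 1 + 1) n, (x ^ i - 1))
        + x ^ (Nat.choose 0 2) * ∏ i ∈ Finset.Icc 1 n, (x ^ i - 1) = x ^ ((n + 1).choose 2) := by
      simpa using h2
    simp only [show Nat.choose 0 2 = 0 from rfl, pow_zero, one_mul] at h2'
    have hQk : ∀ k, Q (k + 1) = ∏ i ∈ Finset.Icc (k + 1 + 1) n, (x ^ i - 1) := fun k => rfl
    simp only [hQk]
    linear_combination h2'
  -- put everything together
  rw [hprod, mul_sub, Finset.mul_sum, Finset.sum_congr rfl hterm, ← Finset.mul_sum, hsum]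
  have hpow1 : x ^ n * x ^ n.choose 2 = x ^ ((n + 1).choose 2) := by
    rw [← pow_add, choose_two_succ, add_comm]
  have hpow2 : x ^ (n ^ 2) * x ^ n = x ^ ((n + 1).choose 2) * x ^ ((n + 1).choose 2) := by
    rw [← pow_add, ← pow_add]
    congr 1
    have := sq_eq_two_choose n
    have := choose_two_succ n
    omega
  rw [hpow1, hpow2]
  ring
end
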